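/- arXiv:1006.0029 — 5 statements merged into one kernel-verified Lean document; each statement's English description precedes it below -/
import Mathlib

section
/- Let A be a positive-definite n×n real matrix and let q be a vector in ℝⁿ with q ≥ 0 and q ≠ 0. Then sup over w ∈ ℝⁿ with w ≥ 0, w ≠ 0, of ⟨w,q⟩² / ⟨w, A w⟩ equals inf over v ∈ ℝⁿ with v ≥ q of ⟨v, A⁻¹ v⟩. -/
/-!
Let `v` minimise `⟨v, A⁻¹ v⟩` over the orthant `v ≥ q`; it exists because the form is coercive.
The first-order condition at `v` says that `w = A⁻¹ v` is nonnegative and `⟨w, q⟩ = ⟨w, v⟩`, so `w`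
attains the value `⟨v, A⁻¹ v⟩` in the supremum. Conversely, for every admissible pair `w`, `v`,
Cauchy–Schwarz for the inner product `⟨x, A y⟩` gives
`⟨w, q⟩² ≤ ⟨w, v⟩² = ⟨w, A (A⁻¹ v)⟩² ≤ ⟨w, A w⟩ ⟨v, A⁻¹ v⟩`.
-/

open Filter Matrix Set Topology

namespace Matrix

variable {ι : Type*} [Fintype ι] {B : Matrix ι ι ℝ}

theorem mulVec_nonsing_inv_mulVec {R : Type*} [CommRing R] [DecidableEq ι] {A : Matrix ι ι R}
    (hA : IsUnit A) (v : ι → R) : A *ᵥ (A⁻¹ *ᵥ v) = v := by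
  rw [mulVec_mulVec, mul_nonsing_inv _ ((isUnit_iff_isUnit_det A).mp hA), one_mulVec]

theorem IsHermitian.dotProduct_mulVec_comm (hB : B.IsHermitian) (x y : ι → ℝ) :
    x ⬝ᵥ B *ᵥ y = y ⬝ᵥ B *ᵥ x := by
  rw [dotProduct_mulVec, ← mulVec_transpose, ← conjTranspose_eq_transpose_of_trivial, hB.eq,
    dotProduct_comm]

theorem IsHermitian.dotProduct_mulVec_add_smul (hB : B.IsHermitian) (x y : ι → ℝ) (t : ℝ) :
    (x + t • y) ⬝ᵥ B *ᵥ (x + t • y) =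
      x ⬝ᵥ B *ᵥ x + 2 * t * (y ⬝ᵥ B *ᵥ x) + t ^ 2 * (y ⬝ᵥ B *ᵥ y) := by
  simp only [mulVec_add, mulVec_smul, dotProduct_add, add_dotProduct, dotProduct_smul,
    smul_dotProduct, smul_eq_mul, hB.dotProduct_mulVec_comm x y]
  ring

theorem continuous_dotProduct_mulVec_self (B : Matrix ι ι ℝ) :
    Continuous fun v : ι → ℝ => v ⬝ᵥ B *ᵥ v :=
  continuous_id.dotProduct (continuous_const.matrix_mulVec continuous_id)

theorem PosSemidef.dotProduct_mulVec_sq_le (hB : B.PosSemidef) (x y : ι → ℝ) :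
    (x ⬝ᵥ B *ᵥ y) ^ 2 ≤ (x ⬝ᵥ B *ᵥ x) * (y ⬝ᵥ B *ᵥ y) := by
  let := B.toSeminormedAddCommGroup hB
  let := B.toInnerProductSpace hB
  have h := real_inner_mul_inner_self_le x y
  change (B *ᵥ y) ⬝ᵥ x * ((B *ᵥ y) ⬝ᵥ x) ≤ ((B *ᵥ x) ⬝ᵥ x) * ((B *ᵥ y) ⬝ᵥ y) at h
  simpa only [sq, dotProduct_comm _ x, dotProduct_comm _ y] using h

theorem PosDef.exists_pos_mul_sq_norm_le (hB : B.PosDef) :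
    ∃ c > 0, ∀ v : ι → ℝ, c * ‖v‖ ^ 2 ≤ v ⬝ᵥ B *ᵥ v := by
  obtain ⟨c, hc, hsphere⟩ := (isCompact_sphere (0 : ι → ℝ) 1).exists_forall_le'
    (continuous_dotProduct_mulVec_self B).continuousOn
    fun u hu => hB.dotProduct_mulVec_pos (ne_zero_of_mem_unit_sphere ⟨u, hu⟩)
  refine ⟨c, hc, fun v => ?_⟩
  rcases eq_or_ne v 0 with rfl | hv
  · simp
  have hnorm : 0 < ‖v‖ := norm_pos_iff.mpr hv
  have hu := hsphere (‖v‖⁻¹ • v) (by simp [norm_smul, hnorm.ne'])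
  rw [mulVec_smul, dotProduct_smul, smul_dotProduct, smul_eq_mul, smul_eq_mul, ← mul_assoc,
    ← sq, inv_pow, ← div_eq_inv_mul, le_div_iff₀ (by positivity)] at hu
  linarith

theorem PosDef.tendsto_dotProduct_mulVec_self_cocompact (hB : B.PosDef) :
    Tendsto (fun v : ι → ℝ => v ⬝ᵥ B *ᵥ v) (cocompact _) atTop := by
  obtain ⟨c, hc, hcoer⟩ := hB.exists_pos_mul_sq_norm_le
  exact tendsto_atTop_mono hcoer
    (((tendsto_pow_atTop two_ne_zero).comp tendsto_norm_cocompact_atTop).const_mul_atTop hc)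

theorem PosDef.exists_isMinOn_dotProduct_mulVec_self (hB : B.PosDef) {s : Set (ι → ℝ)}
    (hs : IsClosed s) (hne : s.Nonempty) :
    ∃ v ∈ s, IsMinOn (fun u => u ⬝ᵥ B *ᵥ u) s v := by
  obtain ⟨x₀, hx₀⟩ := hne
  exact (continuous_dotProduct_mulVec_self B).continuousOn.exists_isMinOn' hs hx₀
    ((hB.tendsto_dotProduct_mulVec_self_cocompact.eventually_ge_atTop _).filter_mono inf_le_left)

theorem IsHermitian.dotProduct_mulVec_nonneg_of_isMinOn (hB : B.IsHermitian)
    {s : Set (ι → ℝ)} (hs : Convex ℝ s) {u v : ι → ℝ} (hu : u ∈ s) (hv : v ∈ s)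
    (hmin : IsMinOn (fun x => x ⬝ᵥ B *ᵥ x) s v) :
    0 ≤ (u - v) ⬝ᵥ B *ᵥ v := by
  set b := (u - v) ⬝ᵥ B *ᵥ v
  set c := (u - v) ⬝ᵥ B *ᵥ (u - v)
  have hsmall : ∀ t ∈ Ioc (0 : ℝ) 1, 0 ≤ 2 * b + t * c := by
    intro t ⟨ht0, ht1⟩
    have h : v ⬝ᵥ B *ᵥ v ≤ (v + t • (u - v)) ⬝ᵥ B *ᵥ (v + t • (u - v)) :=
      hmin (hs.add_smul_sub_mem hv hu ⟨ht0.le, ht1⟩)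
    rw [hB.dotProduct_mulVec_add_smul] at h
    refine nonneg_of_mul_nonneg_right (a := t) ?_ ht0
    linarith
  have hlim : Tendsto (fun t => 2 * b + t * c) (𝓝[>] 0) (𝓝 (2 * b + 0 * c)) :=
    ((continuous_const.add (continuous_id.mul continuous_const)).tendsto 0).mono_left
      nhdsWithin_le_nhds
  have := ge_of_tendsto hlim (eventually_of_mem (Ioc_mem_nhdsGT one_pos) hsmall)
  linarith

theorem IsHermitian.mulVec_nonneg_and_dotProduct_eq_of_isMinOn_Ici [DecidableEq ι]
    (hB : B.IsHermitian) {q v : ι → ℝ} (hqv : q ≤ v)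
    (hmin : IsMinOn (fun x => x ⬝ᵥ B *ᵥ x) (Ici q) v) :
    0 ≤ B *ᵥ v ∧ B *ᵥ v ⬝ᵥ q = B *ᵥ v ⬝ᵥ v := by
  have hfirst : ∀ u, q ≤ u → 0 ≤ (u - v) ⬝ᵥ B *ᵥ v := fun u hu =>
    hB.dotProduct_mulVec_nonneg_of_isMinOn (convex_Ici q) hu hqv hmin
  have hnonneg : 0 ≤ B *ᵥ v := fun i => by
    simpa using hfirst (v + Pi.single i 1)
      (hqv.trans (le_add_of_nonneg_right (Pi.single_nonneg.2 zero_le_one)))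
  refine ⟨hnonneg, le_antisymm (dotProduct_le_dotProduct_of_nonneg_left hqv hnonneg) ?_⟩
  have := hfirst q le_rfl
  rw [sub_dotProduct, dotProduct_comm q, dotProduct_comm v] at this
  linarith

theorem PosDef.sq_dotProduct_div_le [DecidableEq ι] {A : Matrix ι ι ℝ} (hA : A.PosDef)
    {w q v : ι → ℝ} (hw : 0 ≤ w) (hq : 0 ≤ q) (hqv : q ≤ v) :
    (w ⬝ᵥ q) ^ 2 / (w ⬝ᵥ A *ᵥ w) ≤ v ⬝ᵥ A⁻¹ *ᵥ v := by
  have hAinv := mulVec_nonsing_inv_mulVec hA.isUnit v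
  refine div_le_of_le_mul₀ (by simpa using hA.posSemidef.dotProduct_mulVec_nonneg w)
    (by simpa using hA.inv.posSemidef.dotProduct_mulVec_nonneg v) ?_
  calc (w ⬝ᵥ q) ^ 2 ≤ (w ⬝ᵥ A *ᵥ (A⁻¹ *ᵥ v)) ^ 2 := by
        rw [hAinv]
        exact pow_le_pow_left₀ (dotProduct_nonneg_of_nonneg hw hq)
          (dotProduct_le_dotProduct_of_nonneg_left hqv hw) 2
    _ ≤ (w ⬝ᵥ A *ᵥ w) * (A⁻¹ *ᵥ v ⬝ᵥ A *ᵥ (A⁻¹ *ᵥ v)) :=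
        hA.posSemidef.dotProduct_mulVec_sq_le _ _
    _ = v ⬝ᵥ A⁻¹ *ᵥ v * (w ⬝ᵥ A *ᵥ w) := by
        rw [hAinv, dotProduct_comm (A⁻¹ *ᵥ v), mul_comm]

end Matrix

theorem saddle_point_equality (n : ℕ) (A : Matrix (Fin n) (Fin n) ℝ)
    (hA : A.PosDef) (q : Fin n → ℝ) (hq : 0 ≤ q) (hq0 : q ≠ 0) :
    sSup {r : ℝ | ∃ w : Fin n → ℝ, 0 ≤ w ∧ w ≠ 0 ∧
        r = (w ⬝ᵥ q) ^ 2 / (w ⬝ᵥ A.mulVec w)} =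
    sInf {r : ℝ | ∃ v : Fin n → ℝ, q ≤ v ∧ r = v ⬝ᵥ A⁻¹.mulVec v} := by
  obtain ⟨v, hqv, hmin⟩ := hA.inv.exists_isMinOn_dotProduct_mulVec_self isClosed_Ici nonempty_Ici
  obtain ⟨hw, hwq⟩ := hA.inv.isHermitian.mulVec_nonneg_and_dotProduct_eq_of_isMinOn_Ici hqv hmin
  set w := A⁻¹ *ᵥ v
  set m := v ⬝ᵥ A⁻¹ *ᵥ v
  have hAw : A *ᵥ w = v := mulVec_nonsing_inv_mulVec hA.isUnit v
  have hw0 : w ≠ 0 := by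
    rintro hw0
    rw [hw0, mulVec_zero] at hAw
    exact hq0 (le_antisymm (hAw ▸ hqv) hq)
  have hwv : w ⬝ᵥ v = m := dotProduct_comm _ _
  have hgreatest : IsGreatest {r : ℝ | ∃ w : Fin n → ℝ, 0 ≤ w ∧ w ≠ 0 ∧
      r = (w ⬝ᵥ q) ^ 2 / (w ⬝ᵥ A.mulVec w)} m := by
    refine ⟨⟨w, hw, hw0, ?_⟩, ?_⟩
    · rw [hwq, hAw, hwv, sq, mul_self_div_self]
    · rintro r ⟨w', hw', -, rfl⟩
      exact hA.sq_dotProduct_div_le hw' hq hqv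
  have hleast : IsLeast {r : ℝ | ∃ v : Fin n → ℝ, q ≤ v ∧ r = v ⬝ᵥ A⁻¹.mulVec v} m :=
    ⟨⟨v, hqv, rfl⟩, by rintro r ⟨u, hu, rfl⟩; exact hmin hu⟩
  rw [hgreatest.csSup_eq, hleast.csInf_eq]
end

section
/- Let A be a positive-definite n×n real matrix and q ∈ ℝⁿ with q ≥ 0, q ≠ 0. If v⋆ minimizes v ↦ ⟨v, A⁻¹ v⟩ over the set {v : v ≥ q}, then the vector w⋆ := A⁻¹ v⋆ satisfies w⋆ ≥ 0, and ⟨A⁻¹ v⋆, q − v⋆⟩ = 0; moreover for each coordinate i, if (A⁻¹ v⋆)_i > 0 then v⋆_i = q_i. -/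
/-!
Perturb the minimizer `v` along a coordinate axis: for symmetric `B`,
`(v + t eᵢ) ⬝ B (v + t eᵢ) = v ⬝ B v + 2 t (B v)ᵢ + t² Bᵢᵢ`. The box `{v | q ≤ v}` admits
every `t > 0`, so minimality forces `(B v)ᵢ ≥ 0`; when `qᵢ < vᵢ` it also admits small `t < 0`,
which forces `(B v)ᵢ = 0`. Complementary slackness follows coordinatewise.
-/

open Matrix Set Filter Topology

theorem nonneg_of_forall_mem_Ioo_nonneg_mul_add_sq {a c ε : ℝ} (hε : 0 < ε)
    (h : ∀ t ∈ Ioo 0 ε, 0 ≤ t * a + t ^ 2 * c) : 0 ≤ a := by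
  have hlim : Tendsto (fun t => a + t * c) (𝓝[>] 0) (𝓝 a) := by
    have : Tendsto (fun t => a + t * c) (𝓝 0) (𝓝 (a + 0 * c)) :=
      tendsto_const_nhds.add (tendsto_id.mul tendsto_const_nhds)
    simpa using this.mono_left nhdsWithin_le_nhds
  refine ge_of_tendsto hlim ?_
  filter_upwards [Ioo_mem_nhdsGT hε] with t ht
  have hfactor : t * a + t ^ 2 * c = t * (a + t * c) := by ring
  exact nonneg_of_mul_nonneg_right (hfactor ▸ h t ht) ht.1

theorem Matrix.IsSymm.dotProduct_mulVec_add_single {ι R : Type*} [Fintype ι] [DecidableEq ι]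
    [CommRing R] {B : Matrix ι ι R} (hB : B.IsSymm) (v : ι → R) (i : ι) (t : R) :
    (v + Pi.single i t) ⬝ᵥ B *ᵥ (v + Pi.single i t) =
      v ⬝ᵥ B *ᵥ v + (2 * t * (B *ᵥ v) i + t ^ 2 * B i i) := by
  have hcross : v ⬝ᵥ B *ᵥ Pi.single i t = t * (B *ᵥ v) i := by
    rw [dotProduct_mulVec, ← mulVec_transpose, hB.eq, dotProduct_single, mul_comm]
  have hdiag : (B *ᵥ Pi.single i t) i = B i i * t := dotProduct_single _ _ _
  rw [mulVec_add, dotProduct_add, add_dotProduct, add_dotProduct, hcross, single_dotProduct,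
    single_dotProduct, hdiag]
  ring

section BoxMinimizer

variable {ι : Type*} [Fintype ι] [DecidableEq ι] {B : Matrix ι ι ℝ} {q v : ι → ℝ}

theorem IsMinOn.single_increment_nonneg (hB : B.IsSymm) (hqv : q ≤ v)
    (hmin : IsMinOn (fun w => w ⬝ᵥ B *ᵥ w) {w | q ≤ w} v) {i : ι} {t : ℝ}
    (ht : q i - v i ≤ t) : 0 ≤ 2 * t * (B *ᵥ v) i + t ^ 2 * B i i := by
  have hmem : q ≤ v + Pi.single i t := by
    intro j
    rcases eq_or_ne j i with rfl | hj
    · simp only [Pi.add_apply, Pi.single_eq_same]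
      linarith
    · simpa [Pi.single_eq_of_ne hj] using hqv j
  have hle := isMinOn_iff.mp hmin _ hmem
  rw [hB.dotProduct_mulVec_add_single] at hle
  linarith

theorem IsMinOn.mulVec_nonneg (hB : B.IsSymm) (hqv : q ≤ v)
    (hmin : IsMinOn (fun w => w ⬝ᵥ B *ᵥ w) {w | q ≤ w} v) : 0 ≤ B *ᵥ v := by
  intro i
  have h := nonneg_of_forall_mem_Ioo_nonneg_mul_add_sq (a := 2 * (B *ᵥ v) i) one_pos
    fun t ht => by
      have := hmin.single_increment_nonneg hB hqv (i := i) (t := t) (by linarith [hqv i, ht.1])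
      linarith
  simpa using h

theorem IsMinOn.mulVec_apply_eq_zero_of_lt (hB : B.IsSymm) (hqv : q ≤ v)
    (hmin : IsMinOn (fun w => w ⬝ᵥ B *ᵥ w) {w | q ≤ w} v) {i : ι} (hi : q i < v i) :
    (B *ᵥ v) i = 0 := by
  have h := nonneg_of_forall_mem_Ioo_nonneg_mul_add_sq (a := -2 * (B *ᵥ v) i) (sub_pos.2 hi)
    fun t ht => by
      have := hmin.single_increment_nonneg hB hqv (i := i) (t := -t) (by linarith [ht.2])
      linarith
  exact le_antisymm (by linarith) (hmin.mulVec_nonneg hB hqv i)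

end BoxMinimizer

theorem kkt_complementary_slackness_general (n : ℕ) (A : Matrix (Fin n) (Fin n) ℝ)
    (hA : A.PosDef) (q : Fin n → ℝ)
    (vstar : Fin n → ℝ) (hvs : q ≤ vstar)
    (hmin : IsMinOn (fun v : Fin n → ℝ => v ⬝ᵥ A⁻¹.mulVec v) {v | q ≤ v} vstar) :
    0 ≤ A⁻¹.mulVec vstar ∧
    (A⁻¹.mulVec vstar) ⬝ᵥ (q - vstar) = 0 ∧
    (∀ i : Fin n, 0 < (A⁻¹.mulVec vstar) i → vstar i = q i) := by
  have hB : A⁻¹.IsSymm := (isHermitian_iff_isSymm.mp hA.isHermitian).inv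
  have hslack : ∀ i, q i < vstar i → (A⁻¹ *ᵥ vstar) i = 0 := fun i hi =>
    hmin.mulVec_apply_eq_zero_of_lt hB hvs hi
  refine ⟨hmin.mulVec_nonneg hB hvs, Finset.sum_eq_zero fun i _ => ?_, fun i hpos => ?_⟩
  · rcases (hvs i).eq_or_lt with heq | hlt
    · simp [heq]
    · simp [hslack i hlt]
  · by_contra hne
    exact hpos.ne' (hslack i ((hvs i).lt_of_ne (Ne.symm hne)))

theorem kkt_complementary_slackness (n : ℕ) (A : Matrix (Fin n) (Fin n) ℝ)
    (hA : A.PosDef) (q : Fin n → ℝ) (hq : 0 ≤ q) (hq0 : q ≠ 0)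
    (vstar : Fin n → ℝ) (hvs : q ≤ vstar)
    (hmin : IsMinOn (fun v : Fin n → ℝ => v ⬝ᵥ A⁻¹.mulVec v) {v | q ≤ v} vstar) :
    0 ≤ A⁻¹.mulVec vstar ∧
    (A⁻¹.mulVec vstar) ⬝ᵥ (q - vstar) = 0 ∧
    (∀ i : Fin n, 0 < (A⁻¹.mulVec vstar) i → vstar i = q i) :=
  kkt_complementary_slackness_general n A hA q vstar hvs hmin
end

section
/- Let Σ be a positive-definite n×n real matrix, q ∈ ℝⁿ with q > 0, d ∈ ℝⁿ, and u such that uq + d > 0. For a nonzero nonnegative weight vector w ∈ ℝⁿ, define σ²(w) := ⟨w, Σ w⟩ / ⟨w, uq + d⟩². If w⋆ minimizes σ²(w) over nonzero nonnegative w, then σ²(w⋆) = (inf_{v ≥ uq} ⟨v + d, Σ⁻¹ (v + d)⟩)⁻¹. -/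
/-!
Write `b = u • q + d`, `Q = ⟨w⋆, Σ w⋆⟩` and `L = ⟨w⋆, b⟩ > 0`. Perturbing `w⋆` along each
coordinate direction, minimality of `σ²` forces the first-order condition `Σ w⋆ ≥ (Q / L) b`, so
`v⋆ = (L / Q) Σ w⋆` satisfies `v⋆ ≥ b` and `⟨v⋆, Σ⁻¹ v⋆⟩ = L² / Q`. Conversely, for every `v ≥ b`
the Cauchy–Schwarz inequality for the form of `Σ` gives `L² ≤ ⟨w⋆, v⟩² ≤ Q ⟨v, Σ⁻¹ v⟩`. Hence the
infimum equals `L² / Q = σ²(w⋆)⁻¹`.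
-/

open Matrix

theorem nonneg_of_forall_pos_nonneg_mul_add_mul_sq {a c : ℝ}
    (h : ∀ t > 0, 0 ≤ a * t + c * t ^ 2) : 0 ≤ a := by
  by_contra! ha
  set t := -a / (|c| + 1)
  have ht : 0 < t := div_pos (neg_pos.mpr ha) (by positivity)
  have hct : |c| * t < -a := by
    rw [mul_div_assoc', div_lt_iff₀ (by positivity)]
    nlinarith [abs_nonneg c]
  nlinarith [h t ht, le_abs_self c]

section

variable {ι : Type*} [Fintype ι] {M : Matrix ι ι ℝ} {b w : ι → ℝ}

theorem Matrix.IsSymm.dotProduct_mulVec_comm (hM : M.IsSymm) (x y : ι → ℝ) :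
    x ⬝ᵥ M *ᵥ y = y ⬝ᵥ M *ᵥ x := by
  simpa only [hM.eq] using dotProduct_transpose_mulVec M x y

theorem Matrix.IsSymm.add_dotProduct_mulVec_add (hM : M.IsSymm) (x y : ι → ℝ) :
    (x + y) ⬝ᵥ M *ᵥ (x + y) = x ⬝ᵥ M *ᵥ x + 2 * (y ⬝ᵥ M *ᵥ x) + y ⬝ᵥ M *ᵥ y := by
  rw [mulVec_add, add_dotProduct, dotProduct_add, dotProduct_add, hM.dotProduct_mulVec_comm x y]
  ring

theorem Matrix.PosSemidef.sq_dotProduct_mulVec_le (hM : M.PosSemidef) (x y : ι → ℝ) :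
    (x ⬝ᵥ M *ᵥ y) ^ 2 ≤ (x ⬝ᵥ M *ᵥ x) * (y ⬝ᵥ M *ᵥ y) := by
  have hsymm : M.IsSymm := isHermitian_iff_isSymm.mp hM.isHermitian
  have hdiscrim := discrim_le_zero (a := x ⬝ᵥ M *ᵥ x) (b := 2 * (x ⬝ᵥ M *ᵥ y))
    (c := y ⬝ᵥ M *ᵥ y) fun t => by
      have := hM.dotProduct_mulVec_nonneg (t • x + y)
      rw [star_trivial, hsymm.add_dotProduct_mulVec_add, hsymm.dotProduct_mulVec_comm y] at this
      simp only [mulVec_smul, smul_dotProduct, dotProduct_smul, smul_eq_mul] at this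
      linarith
  rw [discrim] at hdiscrim
  linarith

theorem Matrix.PosDef.sq_dotProduct_le [DecidableEq ι] (hM : M.PosDef) (x y : ι → ℝ) :
    (x ⬝ᵥ y) ^ 2 ≤ (x ⬝ᵥ M *ᵥ x) * (y ⬝ᵥ M⁻¹ *ᵥ y) := by
  have hy : M *ᵥ (M⁻¹ *ᵥ y) = y := by
    rw [mulVec_mulVec, mul_nonsing_inv M (M.isUnit_iff_isUnit_det.mp hM.isUnit), one_mulVec]
  calc (x ⬝ᵥ y) ^ 2 = (x ⬝ᵥ M *ᵥ (M⁻¹ *ᵥ y)) ^ 2 := by rw [hy]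
    _ ≤ (x ⬝ᵥ M *ᵥ x) * ((M⁻¹ *ᵥ y) ⬝ᵥ M *ᵥ (M⁻¹ *ᵥ y)) :=
      hM.posSemidef.sq_dotProduct_mulVec_le x _
    _ = (x ⬝ᵥ M *ᵥ x) * (y ⬝ᵥ M⁻¹ *ᵥ y) := by rw [hy, dotProduct_comm _ y]

theorem smul_le_mulVec_of_isMinOn (hM : M.IsSymm) (hb : 0 ≤ b) (hw : 0 ≤ w) (hL : 0 < w ⬝ᵥ b)
    (hmin : IsMinOn (fun x => x ⬝ᵥ M *ᵥ x / (x ⬝ᵥ b) ^ 2) {x | 0 ≤ x ∧ x ≠ 0} w) :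
    (w ⬝ᵥ M *ᵥ w / w ⬝ᵥ b) • b ≤ M *ᵥ w := by
  classical
  intro i
  set Q := w ⬝ᵥ M *ᵥ w
  set L := w ⬝ᵥ b
  have key : ∀ t > 0,
      0 ≤ 2 * L * (L * (M *ᵥ w) i - Q * b i) * t + (L ^ 2 * M i i - Q * b i ^ 2) * t ^ 2 := by
    intro t ht
    -- `σ²(w) ≤ σ²(w + t eᵢ)` with the denominators cleared
    set e : ι → ℝ := t • Pi.single i 1
    have hmem : w + e ∈ {x | 0 ≤ x ∧ x ≠ 0} := by
      refine ⟨add_nonneg hw (smul_nonneg ht.le (Pi.single_nonneg.mpr zero_le_one)), fun h => ?_⟩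
      have := congrFun h i
      simp only [e, Pi.add_apply, Pi.smul_apply, Pi.single_eq_same, smul_eq_mul, mul_one,
        Pi.zero_apply] at this
      linarith [show 0 ≤ w i from hw i]
    have hQe : (w + e) ⬝ᵥ M *ᵥ (w + e) = Q + 2 * t * (M *ᵥ w) i + t ^ 2 * M i i := by
      rw [hM.add_dotProduct_mulVec_add]
      simp only [e, mulVec_smul, mulVec_single, dotProduct_smul, smul_dotProduct,
        single_dotProduct, smul_eq_mul, one_mul, MulOpposite.op_one, one_smul, col_apply]
      ring
    have hLe : (w + e) ⬝ᵥ b = L + t * b i := by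
      simp only [e, add_dotProduct, smul_dotProduct, single_dotProduct, one_mul, smul_eq_mul]
      rfl
    have hLe_pos : 0 < L + t * b i := add_pos_of_pos_of_nonneg hL (mul_nonneg ht.le (hb i))
    have := hmin hmem
    simp only [Set.mem_ofPred_eq, hQe, hLe] at this
    rw [div_le_div_iff₀ (by positivity) (by positivity)] at this
    nlinarith
  have := nonneg_of_forall_pos_nonneg_mul_add_mul_sq key
  rw [Pi.smul_apply, smul_eq_mul, div_mul_eq_mul_div, div_le_iff₀ hL]
  nlinarith

theorem dotProduct_pos_of_nonneg_of_ne_zero (hw : 0 ≤ w) (hw0 : w ≠ 0) (hb : ∀ i, 0 < b i) :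
    0 < w ⬝ᵥ b := by
  obtain ⟨i, hi⟩ := Function.ne_iff.mp hw0
  exact Finset.sum_pos' (fun j _ => mul_nonneg (hw j) (hb j).le)
    ⟨i, Finset.mem_univ i, mul_pos ((hw i).lt_of_ne' hi) (hb i)⟩

theorem isLeast_image_Ici_dotProduct_inv_mulVec [DecidableEq ι] (hM : M.PosDef) (hw : 0 ≤ w)
    (hL : 0 < w ⬝ᵥ b) (hstat : (w ⬝ᵥ M *ᵥ w / w ⬝ᵥ b) • b ≤ M *ᵥ w) :
    IsLeast ((fun v => v ⬝ᵥ M⁻¹ *ᵥ v) '' Set.Ici b) ((w ⬝ᵥ b) ^ 2 / w ⬝ᵥ M *ᵥ w) := by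
  have hQ : 0 < w ⬝ᵥ M *ᵥ w := by
    have hw0 : w ≠ 0 := by rintro rfl; simp at hL
    simpa using hM.dotProduct_mulVec_pos hw0
  have hMS : M⁻¹ *ᵥ M *ᵥ w = w := by
    rw [mulVec_mulVec, nonsing_inv_mul M (M.isUnit_iff_isUnit_det.mp hM.isUnit), one_mulVec]
  refine ⟨⟨(w ⬝ᵥ b / w ⬝ᵥ M *ᵥ w) • M *ᵥ w, ?_, ?_⟩, ?_⟩
  · calc b = (w ⬝ᵥ b / w ⬝ᵥ M *ᵥ w) • (w ⬝ᵥ M *ᵥ w / w ⬝ᵥ b) • b := by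
          rw [smul_smul, div_mul_div_cancel₀ hQ.ne', div_self hL.ne', one_smul]
      _ ≤ (w ⬝ᵥ b / w ⬝ᵥ M *ᵥ w) • M *ᵥ w := smul_le_smul_of_nonneg_left hstat (by positivity)
  · simp only [mulVec_smul, smul_dotProduct, dotProduct_smul, hMS, smul_eq_mul]
    rw [dotProduct_comm (M *ᵥ w)]
    field_simp
  · rintro _ ⟨v, hv, rfl⟩
    rw [div_le_iff₀ hQ, mul_comm]
    calc (w ⬝ᵥ b) ^ 2 ≤ (w ⬝ᵥ v) ^ 2 :=
          pow_le_pow_left₀ hL.le (dotProduct_le_dotProduct_of_nonneg_left hv hw) 2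
      _ ≤ (w ⬝ᵥ M *ᵥ w) * (v ⬝ᵥ M⁻¹ *ᵥ v) := hM.sq_dotProduct_le w v

end

theorem optimal_variance_eq_inverse_decay_rate_general (n : ℕ)
    (Sig : Matrix (Fin n) (Fin n) ℝ) (hSig : Sig.PosDef)
    (q d : Fin n → ℝ) (u : ℝ)
    (hud : ∀ i, 0 < u * q i + d i)
    (wstar : Fin n → ℝ) (hws : 0 ≤ wstar ∧ wstar ≠ 0)
    (hmin : IsMinOn (fun w : Fin n → ℝ => (w ⬝ᵥ Sig.mulVec w) / (w ⬝ᵥ (u • q + d)) ^ 2)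
      {w | 0 ≤ w ∧ w ≠ 0} wstar) :
    (wstar ⬝ᵥ Sig.mulVec wstar) / (wstar ⬝ᵥ (u • q + d)) ^ 2 =
      (sInf {r : ℝ | ∃ v : Fin n → ℝ, u • q ≤ v ∧
        r = (v + d) ⬝ᵥ Sig⁻¹.mulVec (v + d)})⁻¹ := by
  obtain ⟨hw, hw0⟩ := hws
  have hL : 0 < wstar ⬝ᵥ (u • q + d) := dotProduct_pos_of_nonneg_of_ne_zero hw hw0 hud
  have hstat := smul_le_mulVec_of_isMinOn (isHermitian_iff_isSymm.mp hSig.isHermitian)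
    (fun i => (hud i).le) hw hL hmin
  have hset : {r : ℝ | ∃ v : Fin n → ℝ, u • q ≤ v ∧ r = (v + d) ⬝ᵥ Sig⁻¹.mulVec (v + d)} =
      (fun v => v ⬝ᵥ Sig⁻¹ *ᵥ v) '' Set.Ici (u • q + d) := by
    rw [← Set.image_add_const_Ici, Set.image_image]
    ext r
    simp only [Set.mem_ofPred_eq, Set.mem_image, Set.mem_Ici, eq_comm]
  rw [hset, (isLeast_image_Ici_dotProduct_inv_mulVec hSig hw hL hstat).csInf_eq, inv_div]

theorem optimal_variance_eq_inverse_decay_rate (n : ℕ)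
    (Sig : Matrix (Fin n) (Fin n) ℝ) (hSig : Sig.PosDef)
    (q d : Fin n → ℝ) (hq : ∀ i, 0 < q i) (u : ℝ)
    (hud : ∀ i, 0 < u * q i + d i)
    (wstar : Fin n → ℝ) (hws : 0 ≤ wstar ∧ wstar ≠ 0)
    (hmin : IsMinOn (fun w : Fin n → ℝ => (w ⬝ᵥ Sig.mulVec w) / (w ⬝ᵥ (u • q + d)) ^ 2)
      {w | 0 ≤ w ∧ w ≠ 0} wstar) :
    (wstar ⬝ᵥ Sig.mulVec wstar) / (wstar ⬝ᵥ (u • q + d)) ^ 2 =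
      (sInf {r : ℝ | ∃ v : Fin n → ℝ, u • q ≤ v ∧
        r = (v + d) ⬝ᵥ Sig⁻¹.mulVec (v + d)})⁻¹ :=
  optimal_variance_eq_inverse_decay_rate_general n Sig hSig q d u hud wstar hws hmin
end

section
/- Let X = (X₁, X₂) be a centered bivariate Gaussian vector with standard deviations σ₁, σ₂ > 0 and correlation r ∈ (−1, 1), and let q₁, q₂ > 0. Set c := min{(q₁/σ₁)(σ₂/q₂), (σ₁/q₁)(q₂/σ₂)}. Then inf_{v₁ ≥ q₁, v₂ ≥ q₂} ⟨v, Σ⁻¹ v⟩ = (min{σ₁/q₁, σ₂/q₂})^{-2} · (1 + 1_{r < c} · (c − r)²/(1 − r²)), where Σ is the covariance matrix of X. -/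
/-! The substitution `u = v₁ / σ₁`, `w = v₂ / σ₂` turns `⟨v, Σ⁻¹ v⟩` into
`(u² - 2ruw + w²) / (1 - r²)`, to be minimised over the quadrant `u ≥ a`, `w ≥ b`, say with
`0 < a ≤ b`. If `rb ≤ a`, the gradient `∝ (u - rw, w - ru)` at the corner `(a, b)` points into the
quadrant, so the convex form is minimal there; otherwise minimising in `u` for fixed `w` gives
`u = rw ≥ a` and the value `w² ≥ b²`. -/

open Matrix

noncomputable def corrQuadForm (r u w : ℝ) : ℝ := (u ^ 2 - 2 * r * u * w + w ^ 2) / (1 - r ^ 2)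

def corrQuadValues (r a b : ℝ) : Set ℝ :=
  {x | ∃ u w, a ≤ u ∧ b ≤ w ∧ x = corrQuadForm r u w}

theorem corrQuadForm_comm (r u w : ℝ) : corrQuadForm r u w = corrQuadForm r w u := by
  unfold corrQuadForm; ring

theorem corrQuadValues_comm (r a b : ℝ) : corrQuadValues r a b = corrQuadValues r b a := by
  ext x
  constructor <;> rintro ⟨u, w, hu, hw, rfl⟩ <;> exact ⟨w, u, hw, hu, corrQuadForm_comm r u w⟩

theorem isLeast_corrQuadValues_corner {r a b : ℝ} (hr : r ^ 2 < 1) (hrb : r * b ≤ a)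
    (hra : r * a ≤ b) :
    IsLeast (corrQuadValues r a b) (corrQuadForm r a b) := by
  refine ⟨⟨a, b, le_rfl, le_rfl, rfl⟩, ?_⟩
  rintro _ ⟨u, w, hu, hw, rfl⟩
  have hr1 : r ≤ 1 := by nlinarith
  unfold corrQuadForm
  gcongr ?_ / _
  -- with `s = u - a, t = w - b`, the increment is `2s(a - rb) + 2t(b - ra) + (s - t)² + 2(1 - r)st`
  linear_combination 2 * mul_nonneg (sub_nonneg.2 hrb) (sub_nonneg.2 hu) +
    2 * mul_nonneg (sub_nonneg.2 hra) (sub_nonneg.2 hw) + sq_nonneg (u - a - (w - b)) +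
    2 * mul_nonneg (mul_nonneg (sub_nonneg.2 hr1) (sub_nonneg.2 hu)) (sub_nonneg.2 hw)

theorem isLeast_corrQuadValues_edge {r a b : ℝ} (hr : r ^ 2 < 1) (hb : 0 ≤ b) (hab : a ≤ r * b) :
    IsLeast (corrQuadValues r a b) (b ^ 2) := by
  have hd : 0 < 1 - r ^ 2 := by linarith
  refine ⟨⟨r * b, b, hab, le_rfl, ?_⟩, ?_⟩
  · unfold corrQuadForm; field_simp; ring
  rintro _ ⟨u, w, hu, hw, rfl⟩
  unfold corrQuadForm
  rw [le_div_iff₀ hd]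
  -- `u² - 2ruw + w² = (u - rw)² + (1 - r²)w²`
  nlinarith [sq_nonneg (u - r * w), mul_le_mul hw hw hb (hb.trans hw)]

theorem csInf_corrQuadValues_of_le {r a b : ℝ} (hr : r ^ 2 < 1) (ha : 0 ≤ a) (hb : 0 < b)
    (hab : a ≤ b) :
    sInf (corrQuadValues r a b) =
      b ^ 2 * (1 + if r < a / b then (a / b - r) ^ 2 / (1 - r ^ 2) else 0) := by
  have hd : 1 - r ^ 2 ≠ 0 := by linarith
  split_ifs with hcase
  · have hrb : r * b ≤ a := ((lt_div_iff₀ hb).mp hcase).le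
    have hra : r * a ≤ b := by nlinarith
    rw [(isLeast_corrQuadValues_corner hr hrb hra).csInf_eq, corrQuadForm]
    field_simp
    ring
  · have hrb : a ≤ r * b := (div_le_iff₀ hb).mp (not_lt.mp hcase)
    rw [(isLeast_corrQuadValues_edge hr hb.le hrb).csInf_eq]
    ring

theorem csInf_corrQuadValues {r a b : ℝ} (hr : r ^ 2 < 1) (ha : 0 < a) (hb : 0 < b) :
    sInf (corrQuadValues r a b) = (min a⁻¹ b⁻¹ ^ 2)⁻¹ *
      (1 + if r < min (a / b) (b / a) then (min (a / b) (b / a) - r) ^ 2 / (1 - r ^ 2) else 0) := by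
  wlog hab : a ≤ b generalizing a b
  · rw [corrQuadValues_comm, min_comm a⁻¹, min_comm (a / b)]
    exact this hb ha (le_of_not_ge hab)
  have hdiv : a / b ≤ b / a := ((div_le_one₀ hb).2 hab).trans ((one_le_div₀ ha).2 hab)
  rw [min_eq_right (inv_anti₀ ha hab), min_eq_left hdiv, inv_pow, inv_inv,
    csInf_corrQuadValues_of_le hr ha.le hb hab]

theorem dotProduct_inv_covariance_mulVec {σ₁ σ₂ r : ℝ} (hσ₁ : σ₁ ≠ 0) (hσ₂ : σ₂ ≠ 0)
    (hr : r ^ 2 ≠ 1) (v : Fin 2 → ℝ) :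
    v ⬝ᵥ (!![σ₁ ^ 2, r * σ₁ * σ₂; r * σ₁ * σ₂, σ₂ ^ 2])⁻¹ *ᵥ v =
      corrQuadForm r (v 0 / σ₁) (v 1 / σ₂) := by
  have hd : 1 - r ^ 2 ≠ 0 := sub_ne_zero.2 (Ne.symm hr)
  rw [inv_def, adjugate_fin_two_of, det_fin_two_of, Ring.inverse_eq_inv', corrQuadForm]
  simp only [mulVec, dotProduct, Fin.sum_univ_two, Matrix.smul_apply, of_apply, cons_val',
    cons_val_zero, cons_val_one, cons_val_fin_one, smul_eq_mul]
  field_simp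
  ring

theorem setOf_dotProduct_inv_covariance_mulVec {σ₁ σ₂ q₁ q₂ r : ℝ} (hσ₁ : 0 < σ₁) (hσ₂ : 0 < σ₂)
    (hr : r ^ 2 ≠ 1) :
    {x : ℝ | ∃ v : Fin 2 → ℝ, q₁ ≤ v 0 ∧ q₂ ≤ v 1 ∧
        x = v ⬝ᵥ (!![σ₁ ^ 2, r * σ₁ * σ₂; r * σ₁ * σ₂, σ₂ ^ 2])⁻¹ *ᵥ v} =
      corrQuadValues r (q₁ / σ₁) (q₂ / σ₂) := by
  ext x
  constructor
  · rintro ⟨v, h₁, h₂, rfl⟩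
    exact ⟨v 0 / σ₁, v 1 / σ₂, by gcongr, by gcongr,
      dotProduct_inv_covariance_mulVec hσ₁.ne' hσ₂.ne' hr v⟩
  · rintro ⟨u, w, hu, hw, rfl⟩
    refine ⟨![σ₁ * u, σ₂ * w], (div_le_iff₀' hσ₁).1 hu, (div_le_iff₀' hσ₂).1 hw, ?_⟩
    rw [dotProduct_inv_covariance_mulVec hσ₁.ne' hσ₂.ne' hr]
    simp [hσ₁.ne', hσ₂.ne']

theorem bivariate_quadratic_program (σ₁ σ₂ q₁ q₂ r : ℝ)
    (hσ₁ : 0 < σ₁) (hσ₂ : 0 < σ₂) (hq₁ : 0 < q₁) (hq₂ : 0 < q₂)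
    (hr : r ∈ Set.Ioo (-1 : ℝ) 1)
    (Sig : Matrix (Fin 2) (Fin 2) ℝ)
    (hSig : Sig = !![σ₁ ^ 2, r * σ₁ * σ₂; r * σ₁ * σ₂, σ₂ ^ 2])
    (c : ℝ) (hc : c = min ((q₁ / σ₁) * (σ₂ / q₂)) ((σ₁ / q₁) * (q₂ / σ₂))) :
    sInf {x : ℝ | ∃ v : Fin 2 → ℝ, q₁ ≤ v 0 ∧ q₂ ≤ v 1 ∧ x = v ⬝ᵥ Sig⁻¹.mulVec v} =
    ((min (σ₁ / q₁) (σ₂ / q₂)) ^ 2)⁻¹ *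
      (1 + (if r < c then (c - r) ^ 2 / (1 - r ^ 2) else 0)) := by
  have hr' : r ^ 2 < 1 := by nlinarith [hr.1, hr.2]
  subst hSig hc
  rw [setOf_dotProduct_inv_covariance_mulVec hσ₁ hσ₂ hr'.ne,
    csInf_corrQuadValues hr' (by positivity) (by positivity), inv_div, inv_div,
    div_eq_mul_inv (q₁ / σ₁), div_eq_mul_inv (q₂ / σ₂), inv_div, inv_div, mul_comm (q₂ / σ₂)]
end

section
/- Let q₁, q₂ > 0, σ₁, σ₂ > 0 and r ∈ (−1,1), and let Σ be the 2×2 covariance matrix with entries Σ₁₁ = σ₁², Σ₂₂ = σ₂², Σ₁₂ = Σ₂₁ = r σ₁ σ₂. If r ≥ c where c := min{(q₁ σ₂)/(σ₁ q₂), (σ₁ q₂)/(q₁ σ₂)}, then inf_{v₁ ≥ q₁, v₂ ≥ q₂} ⟨v, Σ⁻¹ v⟩ = max{q₁²/σ₁², q₂²/σ₂²}. -/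
/-!
In standardized coordinates `s = v₀ / σ₁`, `t = v₁ / σ₂` the form `⟨v, Σ⁻¹ v⟩` is
`(s² - 2rst + t²) / (1 - r²) = s² + (t - rs)² / (1 - r²)`, and symmetrically in `s` and `t`.
So it is at least `max (s², t²)` on the quadrant and equals `s²` on the regression line `t = rs`.
The condition `r ≥ c` says exactly that the regression line through the corner coordinate of the
harder constraint stays in the quadrant, so the lower bound is attained there.
-/

open Matrix

theorem Matrix.dotProduct_inv_mulVec_fin_two {K : Type*} [Field K] (a b c d : K)
    (v : Fin 2 → K) :
    v ⬝ᵥ (!![a, b; c, d])⁻¹ *ᵥ v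
      = (d * v 0 ^ 2 - (b + c) * v 0 * v 1 + a * v 1 ^ 2) / (a * d - b * c) := by
  rw [Matrix.inv_def, Matrix.adjugate_fin_two_of, Matrix.det_fin_two_of, Ring.inverse_eq_inv']
  simp only [dotProduct, mulVec, Fin.sum_univ_two, smul_apply, of_apply, cons_val', cons_val_zero,
    cons_val_one, empty_val', cons_val_fin_one, smul_eq_mul]
  ring

/-- The quadratic form of the inverse of a correlation matrix with correlation `r`. -/
noncomputable def corrForm (r s t : ℝ) : ℝ := (s ^ 2 - 2 * r * s * t + t ^ 2) / (1 - r ^ 2)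

section corrForm

variable {r : ℝ}

theorem corrForm_comm (r s t : ℝ) : corrForm r s t = corrForm r t s := by
  unfold corrForm; ring

theorem corrForm_eq_sq_add (hr : r ^ 2 ≠ 1) (s t : ℝ) :
    corrForm r s t = s ^ 2 + (t - r * s) ^ 2 / (1 - r ^ 2) := by
  have : 1 - r ^ 2 ≠ 0 := sub_ne_zero.mpr (Ne.symm hr)
  unfold corrForm; field_simp; ring

theorem sq_le_corrForm (hr : r ^ 2 < 1) (s t : ℝ) : s ^ 2 ≤ corrForm r s t := by
  rw [corrForm_eq_sq_add hr.ne]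
  have : 0 < 1 - r ^ 2 := sub_pos.mpr hr
  exact le_add_of_nonneg_right (by positivity)

theorem corrForm_mul_self (hr : r ^ 2 ≠ 1) (s : ℝ) : corrForm r s (r * s) = s ^ 2 := by
  simp [corrForm_eq_sq_add hr]

theorem max_sq_le_corrForm (hr : r ^ 2 < 1) {a b s t : ℝ} (ha : 0 ≤ a) (hb : 0 ≤ b)
    (hs : a ≤ s) (ht : b ≤ t) : max (a ^ 2) (b ^ 2) ≤ corrForm r s t := by
  refine max_le ?_ ?_
  · exact (pow_le_pow_left₀ ha hs 2).trans (sq_le_corrForm hr s t)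
  · exact (pow_le_pow_left₀ hb ht 2).trans (corrForm_comm r s t ▸ sq_le_corrForm hr t s)

theorem exists_corrForm_eq_max_sq_of_div_le (hr : r ^ 2 < 1) {a b : ℝ} (ha : 0 < a)
    (hb : 0 ≤ b) (h : b / a ≤ r) :
    ∃ s t, a ≤ s ∧ b ≤ t ∧ corrForm r s t = max (a ^ 2) (b ^ 2) := by
  have hba : b ≤ r * a := (div_le_iff₀ ha).mp h
  have hr1 : r ≤ 1 := (le_abs_self r).trans ((sq_lt_one_iff_abs_lt_one r).mp hr).le
  have hb2 : b ^ 2 ≤ a ^ 2 := pow_le_pow_left₀ hb (hba.trans (mul_le_of_le_one_left ha.le hr1)) 2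
  exact ⟨a, r * a, le_rfl, hba, by rw [corrForm_mul_self hr.ne, max_eq_left hb2]⟩

theorem exists_corrForm_eq_max_sq (hr : r ^ 2 < 1) {a b : ℝ} (ha : 0 < a) (hb : 0 < b)
    (h : min (a / b) (b / a) ≤ r) :
    ∃ s t, a ≤ s ∧ b ≤ t ∧ corrForm r s t = max (a ^ 2) (b ^ 2) := by
  rcases min_le_iff.mp h with h | h
  · obtain ⟨t, s, ht, hs, hts⟩ := exists_corrForm_eq_max_sq_of_div_le hr hb ha.le h
    exact ⟨s, t, hs, ht, by rw [corrForm_comm, hts, max_comm]⟩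
  · exact exists_corrForm_eq_max_sq_of_div_le hr ha hb.le h

end corrForm

theorem dotProduct_inv_mulVec_covariance {σ₁ σ₂ r : ℝ} (hσ₁ : σ₁ ≠ 0) (hσ₂ : σ₂ ≠ 0)
    (hr : r ^ 2 ≠ 1) (v : Fin 2 → ℝ) :
    v ⬝ᵥ (!![σ₁ ^ 2, r * σ₁ * σ₂; r * σ₁ * σ₂, σ₂ ^ 2])⁻¹ *ᵥ v
      = corrForm r (v 0 / σ₁) (v 1 / σ₂) := by
  have : 1 - r ^ 2 ≠ 0 := sub_ne_zero.mpr (Ne.symm hr)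
  rw [dotProduct_inv_mulVec_fin_two, corrForm]
  field_simp
  ring

theorem bivariate_quadratic_program_high_correlation (σ₁ σ₂ q₁ q₂ r : ℝ)
    (hσ₁ : 0 < σ₁) (hσ₂ : 0 < σ₂) (hq₁ : 0 < q₁) (hq₂ : 0 < q₂)
    (hr : r ∈ Set.Ioo (-1 : ℝ) 1)
    (Sig : Matrix (Fin 2) (Fin 2) ℝ)
    (hSig : Sig = !![σ₁ ^ 2, r * σ₁ * σ₂; r * σ₁ * σ₂, σ₂ ^ 2])
    (c : ℝ) (hc : c = min ((q₁ * σ₂) / (σ₁ * q₂)) ((σ₁ * q₂) / (q₁ * σ₂)))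
    (hrc : c ≤ r) :
    sInf {x : ℝ | ∃ v : Fin 2 → ℝ, q₁ ≤ v 0 ∧ q₂ ≤ v 1 ∧ x = v ⬝ᵥ Sig⁻¹.mulVec v} =
      max (q₁ ^ 2 / σ₁ ^ 2) (q₂ ^ 2 / σ₂ ^ 2) := by
  have hr2 : r ^ 2 < 1 := (sq_lt_one_iff_abs_lt_one r).mpr (abs_lt.mpr hr)
  have hQ := dotProduct_inv_mulVec_covariance hσ₁.ne' hσ₂.ne' hr2.ne
  rw [← hSig] at hQ
  simp_rw [← div_pow, hQ]
  refine IsLeast.csInf_eq ⟨?_, ?_⟩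
  · have hmin : min (q₁ / σ₁ / (q₂ / σ₂)) (q₂ / σ₂ / (q₁ / σ₁)) ≤ r := by
      simpa only [div_div_div_eq, mul_comm σ₂ q₁, mul_comm q₂ σ₁, ← hc] using hrc
    obtain ⟨s, t, hs, ht, hst⟩ :=
      exists_corrForm_eq_max_sq hr2 (div_pos hq₁ hσ₁) (div_pos hq₂ hσ₂) hmin
    refine ⟨![σ₁ * s, σ₂ * t], (div_le_iff₀' hσ₁).mp hs, (div_le_iff₀' hσ₂).mp ht, ?_⟩
    simp [mul_div_cancel_left₀ _ hσ₁.ne', mul_div_cancel_left₀ _ hσ₂.ne', hst]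
  · rintro _ ⟨v, hv₀, hv₁, rfl⟩
    exact max_sq_le_corrForm hr2 (div_pos hq₁ hσ₁).le (div_pos hq₂ hσ₂).le
      (div_le_div_of_nonneg_right hv₀ hσ₁.le) (div_le_div_of_nonneg_right hv₁ hσ₂.le)
end
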